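/- arXiv:0903.0648 — 5 statements merged into one kernel-verified Lean document; each statement's English description precedes it below -/
import Mathlib

section
/- Let H be a subgroup of index m in a group G, and let M be a free ℤH-module of rank at most m. Then the semidirect product M ⋊ H embeds as a subgroup of the restricted wreath product ℤ ≀ G. -/
/-- Semidirect product `M ⋊ G` of a `G`-semimodule `M` (commutative monoid with
`G`-action by automorphisms) with the group `G`; multiplication is
`(m,g)(m',g') = (m + g • m', g * g')`. -/
abbrev Sd (M G : Type*) := M × G

instance Sd.monoid (M G : Type*) [AddCommMonoid M] [Group G] [DistribMulAction G M] :
    Monoid (Sd M G) where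
  mul p q := (p.1 + p.2 • q.1, p.2 * q.2)
  one := ((0 : M), (1 : G))
  mul_assoc p q r := by
    show ((p.1 + p.2 • q.1) + (p.2 * q.2) • r.1, (p.2 * q.2) * r.2) =
      (p.1 + p.2 • (q.1 + q.2 • r.1), p.2 * (q.2 * r.2))
    rw [smul_add, mul_smul, add_assoc, mul_assoc]
  one_mul p := by
    show ((0 : M) + (1 : G) • p.1, 1 * p.2) = p
    simp
  mul_one p := by
    show (p.1 + p.2 • (0 : M), p.2 * 1) = p
    simp

instance Sd.group (M G : Type*) [AddCommGroup M] [Group G] [DistribMulAction G M] :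
    Group (Sd M G) :=
  { Sd.monoid M G with
    inv := fun p => (-(p.2⁻¹ • p.1), p.2⁻¹)
    inv_mul_cancel := fun p => by
      show (-(p.2⁻¹ • p.1) + p.2⁻¹ • p.1, p.2⁻¹ * p.2) = ((0 : M), (1 : G))
      simp }

/-- The translation action of a group `G` on the underlying additive group
`G →₀ ℤ` of the group ring `ℤG`. -/
noncomputable def wreathAction (G : Type*) [Group G] : DistribMulAction G (G →₀ ℤ) where
  smul g f := Finsupp.mapDomain (g * ·) f
  one_smul f := by
    show Finsupp.mapDomain (1 * ·) f = f
    simp only [one_mul]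
    exact Finsupp.mapDomain_id
  mul_smul g h f := by
    show Finsupp.mapDomain (g * h * ·) f
        = Finsupp.mapDomain (g * ·) (Finsupp.mapDomain (h * ·) f)
    rw [← Finsupp.mapDomain_comp]
    congr 1
    funext x
    simp [Function.comp, mul_assoc]
  smul_zero g := Finsupp.mapDomain_zero
  smul_add g f₁ f₂ := Finsupp.mapDomain_add

/-!
Choose `t₁, …, t_k ∈ G` in pairwise distinct right cosets of `H`, possible since `k ≤ [G : H]`.
Then `(h, i) ↦ h tᵢ` is injective on `H × Fin k`, so `(cᵢ) ↦ ∑ cᵢ tᵢ` is an injective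
`H`-equivariant additive map `ℤH^k → ℤG`. Through the basis `M ≅ ℤH^k`, it combines with the
inclusion `H ≤ G` into an injective homomorphism `M ⋊ H → ℤG ⋊ G`.
-/

open Function

namespace Sd

variable {M N H G : Type*} [AddCommMonoid M] [AddCommMonoid N] [Group H] [Group G]
  [DistribMulAction H M] [DistribMulAction G N]

def map (F : M →+ N) (f : H →* G) (hF : ∀ (h : H) (x : M), F (h • x) = f h • F x) :
    Sd M H →* Sd N G where
  toFun p := (F p.1, f p.2)
  map_one' := Prod.ext F.map_zero f.map_one
  map_mul' p q := Prod.ext (by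
      show F (p.1 + p.2 • q.1) = F p.1 + f p.2 • F q.1
      rw [map_add, hF]) (f.map_mul p.2 q.2)

theorem map_injective (F : M →+ N) (f : H →* G) (hF : ∀ (h : H) (x : M), F (h • x) = f h • F x)
    (hF_inj : Injective F) (hf : Injective f) : Injective (map F f hF) :=
  hF_inj.prodMap hf

end Sd

theorem Fin.nonempty_embedding_of_le_natCard {α : Type*} {k : ℕ} (hk : k ≤ Nat.card α) :
    Nonempty (Fin k ↪ α) := by
  cases finite_or_infinite α
  · have := Fintype.ofFinite α
    exact Function.Embedding.nonempty_of_card_le (by simpa [Nat.card_eq_fintype_card] using hk)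
  · exact ⟨Fin.valEmbedding.trans (Infinite.natEmbedding α)⟩

attribute [local instance] wreathAction in
theorem wreathAction_smul_single {G : Type*} [Group G] (g x : G) (n : ℤ) :
    g • Finsupp.single x n = Finsupp.single (g * x) n :=
  Finsupp.mapDomain_single

namespace Subgroup

variable {G : Type*} [Group G] (H : Subgroup G) {ι : Type*}

theorem exists_fin_distinct_right_cosets_of_le_index {k : ℕ} (hk : k ≤ H.index) :
    ∃ t : Fin k → G, ∀ i j, t i * (t j)⁻¹ ∈ H → i = j := by
  obtain ⟨e⟩ := Fin.nonempty_embedding_of_le_natCard hk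
  refine ⟨fun i => (e i).out⁻¹, fun i j hij => e.injective ?_⟩
  rw [← (e i).out_eq', ← (e j).out_eq']
  exact QuotientGroup.eq.mpr (by simpa using hij)

theorem injective_mul_of_distinct_right_cosets {t : ι → G}
    (ht : ∀ i j, t i * (t j)⁻¹ ∈ H → i = j) :
    Injective fun p : ι × H => (p.2 : G) * t p.1 := by
  rintro ⟨i, a⟩ ⟨j, b⟩ hab
  replace hab : (a : G) * t i = b * t j := hab
  obtain rfl : i = j := ht i j (by
    rw [show t i * (t j)⁻¹ = (a : G)⁻¹ * b by
      rw [mul_inv_eq_iff_eq_mul, mul_assoc, ← hab, inv_mul_cancel_left]]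
    exact H.mul_mem (H.inv_mem a.2) b.2)
  simpa using hab

/-- `c ↦ ∑ i, c i * t i`, with `ℤH` viewed inside `ℤG`. -/
noncomputable def sumMulReps (t : ι → G) : (ι →₀ MonoidAlgebra ℤ H) →+ (G →₀ ℤ) :=
  (Finsupp.mapDomain.addMonoidHom fun p : ι × H => (p.2 : G) * t p.1).comp <|
    Finsupp.curryAddEquiv.symm.toAddMonoidHom.comp <|
      Finsupp.mapRange.addMonoidHom MonoidAlgebra.coeffAddEquiv.toAddMonoidHom

theorem sumMulReps_single (t : ι → G) (i : ι) (a : H) (n : ℤ) :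
    sumMulReps H t (Finsupp.single i (MonoidAlgebra.single a n)) =
      Finsupp.single ((a : G) * t i) n := by
  simp [sumMulReps, MonoidAlgebra.coeff_single]

theorem sumMulReps_injective {t : ι → G} (ht : ∀ i j, t i * (t j)⁻¹ ∈ H → i = j) :
    Injective (sumMulReps H t) :=
  (Finsupp.mapDomain_injective (H.injective_mul_of_distinct_right_cosets ht)).comp <|
    Finsupp.curryAddEquiv.symm.injective.comp <|
      Finsupp.mapRange_injective _ (map_zero _) MonoidAlgebra.coeffAddEquiv.injective

attribute [local instance] wreathAction in
theorem sumMulReps_of_smul (t : ι → G) (h : H) (c : ι →₀ MonoidAlgebra ℤ H) :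
    sumMulReps H t (MonoidAlgebra.of ℤ H h • c) = (h : G) • sumMulReps H t c := by
  suffices (sumMulReps H t).comp (DistribSMul.toAddMonoidHom _ (MonoidAlgebra.of ℤ H h)) =
      (DistribSMul.toAddMonoidHom _ (h : G)).comp (sumMulReps H t) from
    DFunLike.congr_fun this c
  refine Finsupp.addHom_ext' fun i => MonoidAlgebra.addMonoidHom_ext fun a n => ?_
  simp [sumMulReps_single, wreathAction_smul_single, mul_assoc]

end Subgroup

/-- If `H` is a subgroup of index `m` in `G` and `M` is a free `ℤH`-module of
rank `k ≤ m`, then `M ⋊ H` embeds in the restricted wreath product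
`ℤ ≀ G = (⨁_{g ∈ G} ℤ) ⋊ G`. -/
theorem stmt3 (G : Type*) [Group G] (H : Subgroup G) (m k : ℕ)
    (hm : H.index = m) (hk : k ≤ m)
    (M : Type*) [AddCommGroup M] [Module (MonoidAlgebra ℤ H) M]
    (b : Module.Basis (Fin k) (MonoidAlgebra ℤ H) M) :
    letI : DistribMulAction H M := DistribMulAction.compHom M (MonoidAlgebra.of ℤ H)
    letI : DistribMulAction G (G →₀ ℤ) := wreathAction G
    ∃ φ : Sd M H →* Sd (G →₀ ℤ) G, Function.Injective φ := by
  let _ : DistribMulAction H M := DistribMulAction.compHom M (MonoidAlgebra.of ℤ H)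
  let _ : DistribMulAction G (G →₀ ℤ) := wreathAction G
  obtain ⟨t, ht⟩ := H.exists_fin_distinct_right_cosets_of_le_index (hm ▸ hk)
  let F : M →+ (G →₀ ℤ) := (H.sumMulReps t).comp b.repr.toAddMonoidHom
  have hF (h : H) (x : M) : F (h • x) = (h : G) • F x :=
    (congrArg (H.sumMulReps t) (b.repr.map_smul (MonoidAlgebra.of ℤ H h) x)).trans
      (H.sumMulReps_of_smul t h _)
  exact ⟨Sd.map F H.subtype hF,
    Sd.map_injective F H.subtype hF ((H.sumMulReps_injective ht).comp b.repr.injective)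
      H.subtype_injective⟩
end

section
/- Let M be a left G-module, let H be a subgroup of G, and suppose M decomposes as an internal direct sum of H-submodules M = F ⊕ K. Let N be an H-subsemimodule of F and let S be the submonoid of M ⋊ G generated by {(n,1) : n ∈ N} and {(0,h) : h ∈ H}. Then for x ∈ F, the element (x,1) belongs to S if and only if x ∈ N. -/
def Sd.semidirectSubmonoid {M G : Type*} [AddCommMonoid M] [Group G] [DistribMulAction G M]
    (N : AddSubmonoid M) (H : Subgroup G) (hN : ∀ h ∈ H, ∀ n ∈ N, h • n ∈ N) :
    Submonoid (Sd M G) where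
  carrier := {p | p.1 ∈ N ∧ p.2 ∈ H}
  mul_mem' hp hq := ⟨N.add_mem hp.1 (hN _ hp.2 _ hq.1), H.mul_mem hp.2 hq.2⟩
  one_mem' := ⟨N.zero_mem, H.one_mem⟩

theorem Sd.closure_le_semidirectSubmonoid {M G : Type*} [AddCommMonoid M] [Group G]
    [DistribMulAction G M] (N : AddSubmonoid M) (H : Subgroup G)
    (hN : ∀ h ∈ H, ∀ n ∈ N, h • n ∈ N) :
    Submonoid.closure
        ({p : Sd M G | ∃ n ∈ N, p = (n, (1 : G))} ∪ {p : Sd M G | ∃ h ∈ H, p = ((0 : M), h)}) ≤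
      Sd.semidirectSubmonoid N H hN := by
  rw [Submonoid.closure_le]
  rintro _ (⟨n, hn, rfl⟩ | ⟨h, hh, rfl⟩)
  · exact ⟨hn, H.one_mem⟩
  · exact ⟨N.zero_mem, hh⟩

theorem stmt5_general (M G : Type*) [AddCommGroup M] [Group G] [DistribMulAction G M]
    (H : Subgroup G) (F : AddSubgroup M)
    (N : AddSubmonoid M)
    (hN : ∀ h ∈ H, ∀ n ∈ N, h • n ∈ N)
    (S : Submonoid (Sd M G))
    (hS : S = Submonoid.closure
      ({p : Sd M G | ∃ n ∈ N, p = (n, (1 : G))} ∪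
       {p : Sd M G | ∃ h ∈ H, p = ((0 : M), h)})) :
    ∀ x ∈ F, ((x, (1 : G)) ∈ S ↔ x ∈ N) := by
  subst hS
  intro x _
  exact ⟨fun hx => (Sd.closure_le_semidirectSubmonoid N H hN hx).1,
    fun hx => Submonoid.subset_closure (Or.inl ⟨x, hx, rfl⟩)⟩

/-- Let `M = F ⊕ K` be a decomposition of the `G`-module `M` into
`H`-submodules (`H ≤ G`), let `N` be an `H`-subsemimodule of `F`, and let `S`
be the submonoid of `M ⋊ G` generated by `{(n,1) : n ∈ N}` and
`{(0,h) : h ∈ H}`.  Then for `x ∈ F` one has `(x,1) ∈ S ↔ x ∈ N`. -/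
theorem stmt5 (M G : Type*) [AddCommGroup M] [Group G] [DistribMulAction G M]
    (H : Subgroup G) (F K : AddSubgroup M)
    (hF : ∀ h ∈ H, ∀ x ∈ F, h • x ∈ F)
    (hK : ∀ h ∈ H, ∀ x ∈ K, h • x ∈ K)
    (hdisj : F ⊓ K = ⊥) (hsup : F ⊔ K = ⊤)
    (N : AddSubmonoid M) (hNF : (N : Set M) ⊆ (F : Set M))
    (hN : ∀ h ∈ H, ∀ n ∈ N, h • n ∈ N)
    (S : Submonoid (Sd M G))
    (hS : S = Submonoid.closure
      ({p : Sd M G | ∃ n ∈ N, p = (n, (1 : G))} ∪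
       {p : Sd M G | ∃ h ∈ H, p = ((0 : M), h)})) :
    ∀ x ∈ F, ((x, (1 : G)) ∈ S ↔ x ∈ N) :=
  stmt5_general M G H F N hN S hS
end

section
/- Let Γ be the Cayley graph of ℤ × ℤ with respect to the standard generators (so edges connect points at ℓ¹-distance 1). The first homology group H₁(Γ) (equivalently, the group of integer-valued 1-cycles) is a free (ℤ × ℤ)-module of rank 1, freely generated by the boundary cycle of the unit square with vertices (0,0), (1,0), (1,1), (0,1). -/
/-!
Write `R = ℤ[x^±1, y^±1]` for the group ring of `ℤ × ℤ`. Recording the coefficients of the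
horizontal and of the vertical edges separately identifies 1-chains with pairs `(a, b) ∈ R²`,
on which `∂(a, b) = a (x - 1) + b (y - 1)`, and the square `c` becomes `(1 - y, x - 1)`.
So cycles are the syzygies of `(x - 1, y - 1)`. This is a regular sequence: `R` is a domain, and
modulo `y - 1` (the kernel of `y ↦ 1`, `R → ℤ[x^±1]`) the element `x - 1` is still a nonzero
divisor. Hence every syzygy is `F • (1 - y, x - 1)` for a unique `F ∈ R`.
-/

namespace Stmt8

/-- Vertices of the Cayley graph of `ℤ × ℤ`. -/
abbrev V := ℤ × ℤ

/-- 1-chains of the grid graph: each edge is uniquely a translate of the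
horizontal edge `(0,0) → (1,0)` (tag `false`) or the vertical edge
`(0,0) → (0,1)` (tag `true`), so oriented edges are encoded as pairs
`(v, dir)` with `v` the tail. -/
abbrev C1 := (V × Bool) →₀ ℤ

/-- The head of an oriented edge. -/
def edgeHead (e : V × Bool) : V := if e.2 then e.1 + (0, 1) else e.1 + (1, 0)

/-- The boundary homomorphism from 1-chains to 0-chains. -/
noncomputable def bnd : C1 →+ (V →₀ ℤ) :=
  Finsupp.liftAddHom fun e =>
    { toFun := fun n => n • (Finsupp.single (edgeHead e) 1 - Finsupp.single e.1 1)
      map_zero' := by simp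
      map_add' := fun a b => by simp [add_smul] }

/-- Translation of 1-chains by an element of `ℤ × ℤ`. -/
noncomputable def transE (g : V) : C1 →+ C1 :=
  Finsupp.mapDomain.addMonoidHom (fun p => (g + p.1, p.2))

/-- The boundary cycle of the unit square with vertices
`(0,0), (1,0), (1,1), (0,1)`, traversed counterclockwise. -/
noncomputable def c : C1 :=
  Finsupp.single (((0 : ℤ), (0 : ℤ)), false) 1 + Finsupp.single (((1 : ℤ), (0 : ℤ)), true) 1
    - Finsupp.single (((0 : ℤ), (1 : ℤ)), false) 1 - Finsupp.single (((0 : ℤ), (0 : ℤ)), true) 1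

end Stmt8

open AddMonoidAlgebra

theorem exists_eq_mul_of_mul_eq_mul {R : Type*} [CommRing R] {s t a b : R}
    (ht : t ∈ nonZeroDivisors R)
    (hs : ∀ x, x * s ∈ Ideal.span {t} → x ∈ Ideal.span {t}) (h : a * s = b * t) :
    ∃ f, a = f * t ∧ b = f * s := by
  obtain ⟨f, rfl⟩ := Ideal.mem_span_singleton'.1 (hs a (h ▸ Ideal.mul_mem_left _ b
    (Ideal.mem_span_singleton_self t)))
  refine ⟨f, rfl, ?_⟩
  have : t * (b - f * s) = 0 := by linear_combination -h
  exact (sub_eq_zero.1 ((mem_nonZeroDivisors_iff.1 ht).1 _ this))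

section
variable {k G : Type*} [CommRing k] [AddCommGroup G]

theorem one_sub_single_dvd_one_sub_single (n : ℤ) :
    1 - single ((0 : G), (1 : ℤ)) (1 : k) ∣ 1 - single (0, n) 1 := by
  have hnat (m : ℕ) :
      1 - single ((0 : G), (1 : ℤ)) (1 : k) ∣ 1 - single (0, (m : ℤ)) 1 := by
    simpa [single_pow] using sub_dvd_pow_sub_pow (1 : k[G × ℤ]) (single (0, 1) 1) m
  obtain ⟨m, rfl | rfl⟩ := Int.eq_nat_or_neg n
  · exact hnat m
  · have : 1 - single ((0 : G), -(m : ℤ)) (1 : k)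
        = single (0, -(m : ℤ)) 1 * (single (0, (m : ℤ)) 1 - 1) := by
      rw [mul_sub, single_mul_single]
      simp [one_def, Prod.mk_zero_zero]
    exact this ▸ (dvd_sub_comm.1 (hnat m)).mul_left _

theorem ker_mapDomainRingHom_fst :
    RingHom.ker (mapDomainRingHom k (AddMonoidHom.fst G ℤ))
      = Ideal.span {1 - single ((0 : G), (1 : ℤ)) (1 : k)} := by
  set I := Ideal.span {1 - single ((0 : G), (1 : ℤ)) (1 : k)}
  refine le_antisymm (fun f hf => ?_) ?_
  · have hsub (f : k[G × ℤ]) : f - mapDomainRingHom k (AddMonoidHom.inl G ℤ)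
        (mapDomainRingHom k (AddMonoidHom.fst G ℤ) f) ∈ I := by
      induction f using induction_linear with
      | zero => simp
      | add x y hx hy => simpa [mapDomain_add, add_sub_add_comm] using I.add_mem hx hy
      | single m r =>
        obtain ⟨g, n⟩ := m
        have : single (g, n) r - single (g, 0) r = single (g, 0) r * (single (0, n) 1 - 1) := by
          rw [mul_sub, single_mul_single]
          simp
        simpa [this] using I.mul_mem_left _
          (Ideal.mem_span_singleton.2 (dvd_sub_comm.1 (one_sub_single_dvd_one_sub_single n)))
    simpa [RingHom.mem_ker.1 hf] using hsub f
  · rw [Ideal.span_le, Set.singleton_subset_iff, SetLike.mem_coe, RingHom.mem_ker, map_sub,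
      map_one, mapDomainRingHom_apply, mapDomain_single]
    simp [one_def]
end

namespace Stmt8

local notation "X₁" => (single ((1 : ℤ), (0 : ℤ)) 1 : AddMonoidAlgebra ℤ V)
local notation "X₂" => (single ((0 : ℤ), (1 : ℤ)) 1 : AddMonoidAlgebra ℤ V)

/-- Together with `verPart`, this identifies a 1-chain with a pair of elements of `ℤ[ℤ × ℤ]`,
under which translation by `g` becomes multiplication by `single g 1`. -/
noncomputable def horPart : C1 →+ AddMonoidAlgebra ℤ V :=
  coeffAddEquiv.symm.toAddMonoidHom.comp
    (Finsupp.comapDomain.addMonoidHom (Prod.mk_left_injective false))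

noncomputable def verPart : C1 →+ AddMonoidAlgebra ℤ V :=
  coeffAddEquiv.symm.toAddMonoidHom.comp
    (Finsupp.comapDomain.addMonoidHom (Prod.mk_left_injective true))

theorem coeff_horPart (x : C1) (v : V) : (horPart x).coeff v = x (v, false) := rfl

theorem coeff_verPart (x : C1) (v : V) : (verPart x).coeff v = x (v, true) := rfl

theorem horPart_single (v : V) (b : Bool) (n : ℤ) :
    horPart (Finsupp.single (v, b) n) = if b then 0 else single v n := by
  ext w
  cases b <;> simp [coeff_horPart, Finsupp.single_apply]

theorem verPart_single (v : V) (b : Bool) (n : ℤ) :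
    verPart (Finsupp.single (v, b) n) = if b then single v n else 0 := by
  ext w
  cases b <;> simp [coeff_verPart, Finsupp.single_apply]

theorem ext_horPart_verPart {x y : C1} (hh : horPart x = horPart y)
    (hv : verPart x = verPart y) : x = y := by
  ext ⟨v, _ | _⟩
  · exact congr(($hh).coeff v)
  · exact congr(($hv).coeff v)

theorem ofCoeff_bnd (x : C1) :
    ofCoeff (bnd x) = horPart x * (X₁ - 1) + verPart x * (X₂ - 1) := by
  induction x using Finsupp.induction_linear with
  | zero => simp
  | add x y hx hy => simp only [map_add, ofCoeff_add, hx, hy]; ring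
  | single e n =>
    obtain ⟨v, b⟩ := e
    rw [bnd, Finsupp.liftAddHom_apply_single]
    cases b <;> simp [edgeHead, horPart_single, verPart_single, mul_sub, single_mul_single,
      one_def, ofCoeff_sub, intCast_def]

theorem horPart_transE_c (g : V) : horPart (transE g c) = single g 1 * (1 - X₂) := by
  simp only [transE, c, map_sub, map_add, Finsupp.mapDomain.addMonoidHom_apply,
    Finsupp.mapDomain_single, horPart_single]
  simp [mul_sub, single_mul_single, one_def, Prod.mk_zero_zero]

theorem verPart_transE_c (g : V) : verPart (transE g c) = single g 1 * (X₁ - 1) := by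
  simp only [transE, c, map_sub, map_add, Finsupp.mapDomain.addMonoidHom_apply,
    Finsupp.mapDomain_single, verPart_single]
  simp [mul_sub, single_mul_single, one_def, Prod.mk_zero_zero]

noncomputable def squareChain : (V →₀ ℤ) →+ C1 :=
  (Finsupp.linearCombination ℤ fun g => transE g c).toAddMonoidHom

theorem squareChain_single (g : V) : squareChain (Finsupp.single g 1) = transE g c := by
  simp [squareChain]

theorem horPart_squareChain (F : V →₀ ℤ) :
    horPart (squareChain F) = ofCoeff F * (1 - X₂) := by
  induction F using Finsupp.induction_linear with
  | zero => simp
  | add F G hF hG => simp only [map_add, ofCoeff_add, hF, hG, add_mul]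
  | single g n => simp [squareChain, horPart_transE_c, ← smul_mul_assoc, smul_single]

theorem verPart_squareChain (F : V →₀ ℤ) :
    verPart (squareChain F) = ofCoeff F * (X₁ - 1) := by
  induction F using Finsupp.induction_linear with
  | zero => simp
  | add F G hF hG => simp only [map_add, ofCoeff_add, hF, hG, add_mul]
  | single g n => simp [squareChain, verPart_transE_c, ← smul_mul_assoc, smul_single]

theorem one_sub_X₂_ne_zero : (1 : AddMonoidAlgebra ℤ V) - X₂ ≠ 0 := by
  rw [sub_ne_zero, one_def]
  exact fun h => by simpa [Prod.ext_iff] using single_left_injective one_ne_zero h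

theorem mem_span_of_mul_X₁_sub_one_mem_span {x : AddMonoidAlgebra ℤ V}
    (hx : x * (X₁ - 1) ∈ Ideal.span {1 - X₂}) : x ∈ Ideal.span {1 - X₂} := by
  rw [← ker_mapDomainRingHom_fst, RingHom.mem_ker, map_mul, mul_eq_zero] at hx
  rw [← ker_mapDomainRingHom_fst, RingHom.mem_ker]
  refine hx.resolve_right ?_
  rw [map_sub, map_one, mapDomainRingHom_apply, mapDomain_single, ← Ne, sub_ne_zero, one_def]
  exact fun h => by simpa using single_left_injective one_ne_zero h

theorem bnd_squareChain (F : V →₀ ℤ) : bnd (squareChain F) = 0 := by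
  apply ofCoeff_injective
  rw [ofCoeff_bnd, horPart_squareChain, verPart_squareChain, ofCoeff_zero]
  ring

theorem range_squareChain : squareChain.range = bnd.ker := by
  refine le_antisymm (fun _ ⟨F, hF⟩ => hF ▸ bnd_squareChain F) fun x hx => ?_
  have hcycle : horPart x * (X₁ - 1) = verPart x * (1 - X₂) := by
    have := ofCoeff_bnd x
    rw [AddMonoidHom.mem_ker.1 hx, ofCoeff_zero] at this
    linear_combination -this
  obtain ⟨F, hh, hv⟩ := exists_eq_mul_of_mul_eq_mul
    (mem_nonZeroDivisors_of_ne_zero one_sub_X₂_ne_zero)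
    (fun _ => mem_span_of_mul_X₁_sub_one_mem_span) hcycle
  exact ⟨F.coeff, ext_horPart_verPart (by rw [horPart_squareChain, hh])
    (by rw [verPart_squareChain, hv])⟩

theorem squareChain_injective : Function.Injective squareChain := by
  rw [injective_iff_map_eq_zero]
  intro F hF
  have := horPart_squareChain F
  rw [hF, map_zero, eq_comm, mul_eq_zero] at this
  exact ofCoeff_eq_zero.1 (this.resolve_right one_sub_X₂_ne_zero)

/-- The group of integer 1-cycles `H₁(Γ) = Z₁(Γ)` of the Cayley graph `Γ` of
`ℤ × ℤ` is a free `(ℤ × ℤ)`-module of rank 1, freely generated by the boundary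
cycle `c` of the unit square: there is an additive isomorphism from the group
ring `ℤ[ℤ × ℤ]` to `ker ∂` sending the basis element `g` to the translate
`g + c` (this is exactly a `ℤ[ℤ × ℤ]`-module isomorphism onto the cycles). -/
theorem stmt8 :
    ∃ e : (V →₀ ℤ) ≃+ bnd.ker,
      ∀ g : V, ((e (Finsupp.single g 1) : bnd.ker) : C1) = transE g c :=
  ⟨(AddMonoidHom.ofInjective squareChain_injective).trans
    (AddEquiv.addSubgroupCongr range_squareChain), squareChain_single⟩

end Stmt8
end

section
/- Let R be a nonzero ring, G = ℤ × ℤ, and M a free RG-module with basis B. In the semidirect product M ⋊ G, generated by B ∪ {x, y} with x = (0,(1,0)) and y = (0,(0,1)), let F ⊆ M be a finite set of nonzero elements and let L be the rational subset {x^{±1},y^{±1}}* [(x ∪ Fx)* y (x⁻¹)*]* {x^{±1},y^{±1}}* (where elements f ∈ F stand for (f,0) ∈ M ⋊ G). Then for m ∈ M, the element (m,(0,0)) belongs to L if and only if m is a subset sum of F (i.e., m = Σᵢ gᵢ·fᵢ with the gᵢ ∈ G pairwise distinct and fᵢ ∈ F). -/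
open scoped Pointwise

open Multiplicative Finset

namespace Sd

variable {M G : Type*} [AddCommGroup M] [Group G] [DistribMulAction G M]

theorem one_def : (1 : Sd M G) = (0, 1) := rfl

theorem mul_fst (p q : Sd M G) : (p * q).1 = p.1 + p.2 • q.1 := rfl

theorem mul_snd (p q : Sd M G) : (p * q).2 = p.2 * q.2 := rfl

def inr : G →* Sd M G where
  toFun g := (0, g)
  map_one' := rfl
  map_mul' a b := Prod.ext (by simp [mul_fst]) rfl

@[simp]
theorem inr_apply (g : G) : (inr g : Sd M G) = (0, g) := rfl

theorem inr_mul_mul_inr (a b : G) (p : Sd M G) :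
    inr a * p * inr b = (a • p.1, a * p.2 * b) :=
  Prod.ext (by simp [mul_fst, mul_snd]) rfl

theorem mul_inr (p : Sd M G) (b : G) : p * inr b = (p.1, p.2 * b) :=
  Prod.ext (by simp [mul_fst]) rfl

/-- The product `(c 0, a) * (c 1, a) * ⋯ * (c (k - 1), a)`. -/
theorem mk_sum_pow_mem {S : Submonoid (Sd M G)} {a : G} {c : ℕ → M} {k : ℕ}
    (hc : ∀ i < k, ((c i, a) : Sd M G) ∈ S) :
    ((∑ i ∈ range k, a ^ i • c i, a ^ k) : Sd M G) ∈ S := by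
  induction k with
  | zero =>
    simp only [range_zero, sum_empty, pow_zero]
    exact S.one_mem
  | succ k ih =>
    have hmul := S.mul_mem (ih fun i hi => hc i (by omega)) (hc k (by omega))
    convert hmul using 1
    exact Prod.ext (by simp [mul_fst, sum_range_succ]) (pow_succ a k)

end Sd

section SubsetSum

variable {M G : Type*} [AddCommMonoid M] [Group G] [DistribMulAction G M]

def IsSubsetSumOn (F : Set M) (T : Set G) (m : M) : Prop :=
  ∃ (s : Finset G) (f : G → M), (∀ g ∈ s, g ∈ T ∧ f g ∈ F) ∧ m = ∑ g ∈ s, g • f g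

namespace IsSubsetSumOn

variable {F : Set M} {T T' : Set G} {m m' : M}

theorem zero : IsSubsetSumOn F T 0 := ⟨∅, 0, by simp, by simp⟩

theorem smul_mem {g : G} {f : M} (hg : g ∈ T) (hf : f ∈ F) : IsSubsetSumOn F T (g • f) :=
  ⟨{g}, fun _ => f, by simpa using ⟨hg, hf⟩, by simp⟩

theorem mono (h : IsSubsetSumOn F T m) (hT : T ⊆ T') : IsSubsetSumOn F T' m := by
  obtain ⟨s, f, hs, rfl⟩ := h
  exact ⟨s, f, fun g hg => ⟨hT (hs g hg).1, (hs g hg).2⟩, rfl⟩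

theorem smul (h : IsSubsetSumOn F T m) (a : G) : IsSubsetSumOn F (a • T) (a • m) := by
  obtain ⟨s, f, hs, rfl⟩ := h
  refine ⟨s.map (Equiv.mulLeft a).toEmbedding, fun g => f (a⁻¹ * g), ?_, ?_⟩
  · simp only [mem_map_equiv, Equiv.mulLeft_symm_apply]
    exact fun g hg => ⟨Set.mem_smul_set_iff_inv_smul_mem.2 (hs _ hg).1, (hs _ hg).2⟩
  · simp [Finset.smul_sum, mul_smul]

theorem add (h : IsSubsetSumOn F T m) (h' : IsSubsetSumOn F T' m') (hT : Disjoint T T') :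
    IsSubsetSumOn F (T ∪ T') (m + m') := by
  classical
  obtain ⟨s, f, hs, rfl⟩ := h
  obtain ⟨s', f', hs', rfl⟩ := h'
  have hss' : Disjoint s s' := Finset.disjoint_left.2 fun g hg hg' =>
    Set.disjoint_left.1 hT (hs g hg).1 (hs' g hg').1
  have hs's : ∀ g ∈ s', g ∉ s := fun g hg' hg => Finset.disjoint_left.1 hss' hg hg'
  refine ⟨s ∪ s', s.piecewise f f', ?_, ?_⟩
  · intro g hg
    rcases Finset.mem_union.1 hg with hg | hg
    · rw [piecewise_eq_of_mem _ _ _ hg]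
      exact ⟨Or.inl (hs g hg).1, (hs g hg).2⟩
    · rw [piecewise_eq_of_notMem _ _ _ (hs's g hg)]
      exact ⟨Or.inr (hs' g hg).1, (hs' g hg).2⟩
  · rw [sum_union hss']
    congr 1 <;> refine sum_congr rfl fun g hg => ?_
    · rw [piecewise_eq_of_mem _ _ _ hg]
    · rw [piecewise_eq_of_notMem _ _ _ (hs's g hg)]

end IsSubsetSumOn

theorem isSubsetSumOn_univ_iff {F : Set M} {m : M} :
    IsSubsetSumOn F (Set.univ : Set G) m ↔ ∃ (n : ℕ) (g : Fin n → G), Function.Injective g ∧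
      ∃ f : Fin n → M, (∀ i, f i ∈ F) ∧ m = ∑ i, g i • f i := by
  constructor
  · rintro ⟨s, f, hs, rfl⟩
    refine ⟨s.card, fun i => s.equivFin.symm i,
      Subtype.val_injective.comp s.equivFin.symm.injective, fun i => f (s.equivFin.symm i),
      fun i => (hs _ (s.equivFin.symm i).2).2, ?_⟩
    rw [← sum_coe_sort s]
    exact (Equiv.sum_comp s.equivFin.symm fun g => (g : G) • f g).symm
  · rintro ⟨n, g, hg, f, hf, rfl⟩
    refine ⟨univ.map ⟨g, hg⟩, Function.extend g f 0, ?_, ?_⟩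
    · simpa [hg.extend_apply] using hf
    · simp [hg.extend_apply]

end SubsetSum

section Strip

variable {G : Type*} [Group G]

def strip (H : Subgroup G) (φ : G →* Multiplicative ℤ) (lo hi : ℤ) : Set G :=
  {g | g ∈ H ∧ lo ≤ (φ g).toAdd ∧ (φ g).toAdd < hi}

variable {H : Subgroup G} {φ : G →* Multiplicative ℤ}

theorem smul_strip {a : G} (ha : a ∈ H) (lo hi : ℤ) :
    a • strip H φ lo hi = strip H φ ((φ a).toAdd + lo) ((φ a).toAdd + hi) := by
  ext g
  have hφ : (φ (a⁻¹ * g)).toAdd = (φ g).toAdd - (φ a).toAdd := by simp; ring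
  simp only [Set.mem_smul_set_iff_inv_smul_mem, smul_eq_mul, strip, Set.mem_ofPred_eq, hφ,
    H.mul_mem_cancel_left (H.inv_mem ha)]
  constructor <;> rintro ⟨h, h1, h2⟩ <;> exact ⟨h, by omega, by omega⟩

theorem strip_union_strip {lo mid hi : ℤ} (h₁ : lo ≤ mid) (h₂ : mid ≤ hi) :
    strip H φ lo mid ∪ strip H φ mid hi = strip H φ lo hi := by
  ext g
  simp only [strip, Set.mem_union, Set.mem_ofPred_eq]
  constructor
  · rintro (⟨h, _, _⟩ | ⟨h, _, _⟩) <;> exact ⟨h, by omega, by omega⟩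
  · rintro ⟨h, _, _⟩
    by_cases hg : (φ g).toAdd < mid
    · exact Or.inl ⟨h, by omega, hg⟩
    · exact Or.inr ⟨h, by omega, by omega⟩

theorem disjoint_strip_strip (lo mid hi : ℤ) :
    Disjoint (strip H φ lo mid) (strip H φ mid hi) :=
  Set.disjoint_left.2 fun _ h₁ h₂ => by have := h₁.2.2; have := h₂.2.1; omega

end Strip

section StripSums

variable {M G : Type*} [AddCommGroup M] [Group G] [DistribMulAction G M]

def stripSubsetSums (F : Set M) (H : Subgroup G) (φ : G →* Multiplicative ℤ) :
    Submonoid (Sd M G) where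
  carrier := {p | p.2 ∈ H ∧ 0 ≤ (φ p.2).toAdd ∧ IsSubsetSumOn F (strip H φ 0 (φ p.2).toAdd) p.1}
  one_mem' := ⟨H.one_mem, by simp [Sd.one_def], .zero⟩
  mul_mem' := by
    rintro p q ⟨hpH, hp0, hp⟩ ⟨hqH, hq0, hq⟩
    have hφ : (φ (p.2 * q.2)).toAdd = (φ p.2).toAdd + (φ q.2).toAdd := by simp
    refine ⟨H.mul_mem hpH hqH, by rw [Sd.mul_snd, hφ]; omega, ?_⟩
    -- `p.2` translates the strip of `q` to lie just above that of `p`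
    have hpq := hp.add (hq.smul p.2) (by
      rw [smul_strip hpH, add_zero]
      exact disjoint_strip_strip _ _ _)
    rwa [smul_strip hpH, add_zero, strip_union_strip hp0 (by omega), ← hφ] at hpq

end StripSums

namespace SubsetSumLanguage

open Sd

abbrev G2 := Multiplicative (ℤ × ℤ)

def e₁ : G2 := ofAdd (1, 0)

def e₂ : G2 := ofAdd (0, 1)

theorem e₂_pow_mul_e₁_pow (i j : ℕ) : e₂ ^ j * e₁ ^ i = ofAdd ((i : ℤ), (j : ℤ)) := by
  simp [e₁, e₂, ← ofAdd_nsmul, ← ofAdd_add]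

theorem eq_e₁_zpow_mul_e₂_zpow (g : G2) : g = e₁ ^ g.toAdd.1 * e₂ ^ g.toAdd.2 := by
  apply toAdd.injective
  simp [e₁, e₂, ← ofAdd_zsmul, ← ofAdd_add]

def φ₁ : G2 →* Multiplicative ℤ := AddMonoidHom.toMultiplicative (AddMonoidHom.fst ℤ ℤ)

def φ₂ : G2 →* Multiplicative ℤ := AddMonoidHom.toMultiplicative (AddMonoidHom.snd ℤ ℤ)

theorem toAdd_φ₂ (g : G2) : (φ₂ g).toAdd = g.toAdd.2 := rfl

theorem mem_ker_φ₂ {g : G2} : g ∈ φ₂.ker ↔ g.toAdd.2 = 0 := by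
  rw [MonoidHom.mem_ker, ← toAdd_eq_zero]
  rfl

variable {M : Type*} [AddCommGroup M] [DistribMulAction G2 M]

def gens : Set (Sd M G2) := {inr e₁, (inr e₁)⁻¹, inr e₂, (inr e₂)⁻¹}

def rowMonoid (F : Set M) : Submonoid (Sd M G2) :=
  Submonoid.closure ({inr e₁} ∪ (fun f => ((f, 1) : Sd M G2) * inr e₁) '' F)

def bandMonoid (F : Set M) : Submonoid (Sd M G2) :=
  Submonoid.closure ((rowMonoid F : Set (Sd M G2)) * {inr e₂} *
    (Submonoid.closure {(inr e₁ : Sd M G2)⁻¹} : Set (Sd M G2)))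

def language (F : Set M) : Set (Sd M G2) :=
  (Submonoid.closure (gens (M := M)) : Set (Sd M G2)) * bandMonoid F *
    (Submonoid.closure (gens (M := M)) : Set (Sd M G2))

theorem closure_gens : Submonoid.closure (gens : Set (Sd M G2)) = MonoidHom.mrange inr := by
  have hgens : (gens : Set (Sd M G2)) = {inr e₁, inr e₂} ∪ {inr e₁, inr e₂}⁻¹ := by
    ext
    simp only [gens, Set.mem_insert_iff, Set.mem_singleton_iff, Set.mem_union, Set.mem_inv,
      inv_eq_iff_eq_inv]
    tauto
  rw [hgens, ← Subgroup.closure_toSubmonoid, ← Set.image_pair, ← MonoidHom.map_closure]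
  ext p
  constructor
  · rintro ⟨g, -, rfl⟩
    exact ⟨g, rfl⟩
  · rintro ⟨g, rfl⟩
    refine ⟨g, ?_, rfl⟩
    rw [eq_e₁_zpow_mul_e₂_zpow g]
    exact mul_mem (zpow_mem (Subgroup.subset_closure (by simp)) _)
      (zpow_mem (Subgroup.subset_closure (by simp)) _)

theorem rowMonoid_le (F : Set M) : rowMonoid F ≤ stripSubsetSums F φ₂.ker φ₁ := by
  rw [rowMonoid, Submonoid.closure_le]
  have h1 : (1 : G2) ∈ strip φ₂.ker φ₁ 0 (φ₁ e₁).toAdd := ⟨one_mem _, le_rfl, zero_lt_one⟩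
  rintro _ (rfl | ⟨f, hf, rfl⟩)
  · exact ⟨rfl, zero_le_one, .zero⟩
  · simp only [mul_inr, one_mul]
    exact ⟨rfl, zero_le_one, by simpa using IsSubsetSumOn.smul_mem h1 hf⟩

theorem bandMonoid_le (F : Set M) : bandMonoid F ≤ stripSubsetSums F ⊤ φ₂ := by
  rw [bandMonoid, Submonoid.closure_le]
  rintro _ ⟨_, ⟨w, hw, _, rfl, rfl⟩, v, hv, rfl⟩
  have hxinv : Submonoid.closure {(inr e₁ : Sd M G2)⁻¹} ≤ φ₂.ker.toSubmonoid.map inr := by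
    rw [Submonoid.closure_le, Set.singleton_subset_iff, ← map_inv]
    exact ⟨e₁⁻¹, mem_ker_φ₂.2 rfl, rfl⟩
  obtain ⟨b, hb, rfl⟩ := hxinv hv
  obtain ⟨hw₂, -, hw⟩ := rowMonoid_le F hw
  have hφ : (φ₂ (w.2 * e₂ * b)).toAdd = 1 := by
    simp [toAdd_φ₂, mem_ker_φ₂.1 hw₂, mem_ker_φ₂.1 hb, e₂]
  simp only [mul_inr]
  refine ⟨Subgroup.mem_top _, hφ.symm ▸ zero_le_one, hw.mono ?_⟩
  rw [hφ]
  rintro g ⟨hg, -, -⟩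
  simp [strip, toAdd_φ₂, mem_ker_φ₂.1 hg]

theorem isSubsetSumOn_of_mk_one_mem_language {F : Set M} {m : M}
    (h : ((m, 1) : Sd M G2) ∈ language F) : IsSubsetSumOn F (Set.univ : Set G2) m := by
  obtain ⟨_, ⟨l, hl, c, hc, rfl⟩, r, hr, hlcr⟩ := h
  rw [SetLike.mem_coe, closure_gens] at hl hr
  obtain ⟨a, rfl⟩ := hl
  obtain ⟨b, rfl⟩ := hr
  obtain ⟨-, -, hc⟩ := bandMonoid_le F hc
  simp only [inr_mul_mul_inr, Prod.mk.injEq] at hlcr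
  exact hlcr.1 ▸ (hc.smul a).mono (Set.subset_univ _)

theorem inr_mem_closure_gens (g : G2) : (inr g : Sd M G2) ∈ Submonoid.closure gens := by
  rw [closure_gens]
  exact ⟨g, rfl⟩

theorem mk_e₁_mem_rowMonoid {F : Set M} {c : M} (hc : c = 0 ∨ c ∈ F) :
    ((c, e₁) : Sd M G2) ∈ rowMonoid F := by
  apply Submonoid.subset_closure
  rcases hc with rfl | hc
  · exact Or.inl rfl
  · exact Or.inr ⟨c, hc, by simp only [mul_inr, one_mul]⟩

theorem mk_e₂_mem_bandMonoid {F : Set M} {c : M} {k : ℕ}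
    (hc : ((c, e₁ ^ k) : Sd M G2) ∈ rowMonoid F) : ((c, e₂) : Sd M G2) ∈ bandMonoid F := by
  apply Submonoid.subset_closure
  refine ⟨_, Set.mul_mem_mul hc (Set.mem_singleton _), _,
    pow_mem (Submonoid.subset_closure (Set.mem_singleton _)) k, ?_⟩
  simp only [← map_inv, ← map_pow, mul_inr, inv_pow, mul_inv_cancel_comm]

theorem sum_mem_bandMonoid {F : Set M} {c : ℕ → ℕ → M} (hc : ∀ i j, c i j = 0 ∨ c i j ∈ F)
    (k n : ℕ) :
    ((∑ j ∈ range n, e₂ ^ j • ∑ i ∈ range k, e₁ ^ i • c i j, e₂ ^ n) : Sd M G2) ∈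
      bandMonoid F :=
  mk_sum_pow_mem fun j _ => mk_e₂_mem_bandMonoid (mk_sum_pow_mem fun i _ =>
    mk_e₁_mem_rowMonoid (hc i j))

def boxEmbedding (a : G2) : ℕ × ℕ ↪ G2 where
  toFun p := a * ofAdd ((p.1 : ℤ), (p.2 : ℤ))
  inj' p q h := by simpa [Prod.ext_iff] using h

theorem toAdd_boxEmbedding (a : G2) (p : ℕ × ℕ) :
    (boxEmbedding a p).toAdd = a.toAdd + ((p.1 : ℤ), (p.2 : ℤ)) := rfl

theorem exists_subset_map_boxEmbedding (s : Finset G2) :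
    ∃ a N, s ⊆ (range N ×ˢ range N).map (boxEmbedding a) := by
  set B := s.sup fun g => g.toAdd.1.natAbs + g.toAdd.2.natAbs
  refine ⟨ofAdd (-(B : ℤ), -(B : ℤ)), 2 * B + 1, fun g hg => ?_⟩
  have hgB : g.toAdd.1.natAbs + g.toAdd.2.natAbs ≤ B :=
    le_sup (f := fun g : G2 => g.toAdd.1.natAbs + g.toAdd.2.natAbs) hg
  refine mem_map.2 ⟨((g.toAdd.1 + B).toNat, (g.toAdd.2 + B).toNat), ?_, ?_⟩
  · simp only [mem_product, mem_range]
    omega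
  · apply toAdd.injective
    simp only [toAdd_boxEmbedding, toAdd_ofAdd, Prod.ext_iff, Prod.fst_add, Prod.snd_add]
    omega

theorem mk_one_mem_language_of_isSubsetSumOn {F : Set M} {m : M}
    (h : IsSubsetSumOn F (Set.univ : Set G2) m) : ((m, 1) : Sd M G2) ∈ language F := by
  obtain ⟨s, f, hs, rfl⟩ := h
  obtain ⟨a, N, hsN⟩ := exists_subset_map_boxEmbedding s
  set d : G2 → M := fun g => if g ∈ s then f g else 0
  have hd (g : G2) : d g = 0 ∨ d g ∈ F := by
    by_cases hg : g ∈ s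
    · simp [d, hg, (hs g hg).2]
    · simp [d, hg]
  have hsum : ∑ g ∈ s, g • f g =
      a • ∑ j ∈ range N, e₂ ^ j • ∑ i ∈ range N, e₁ ^ i • d (boxEmbedding a (i, j)) :=
    calc ∑ g ∈ s, g • f g = ∑ g ∈ s, g • d g := sum_congr rfl fun g hg => by simp [d, hg]
      _ = ∑ g ∈ (range N ×ˢ range N).map (boxEmbedding a), g • d g :=
        sum_subset hsN fun g _ hg => by simp [d, hg]
      _ = _ := by
        simp only [sum_map, sum_product_right, smul_sum, ← mul_smul, e₂_pow_mul_e₁_pow]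
        rfl
  have hmem := Set.mul_mem_mul (Set.mul_mem_mul (inr_mem_closure_gens a)
    (sum_mem_bandMonoid (fun i j => hd (boxEmbedding a (i, j))) N N))
    (inr_mem_closure_gens (a * e₂ ^ N)⁻¹)
  rwa [inr_mul_mul_inr, mul_inv_cancel, ← hsum] at hmem

theorem mk_one_mem_language_iff {F : Set M} {m : M} :
    ((m, 1) : Sd M G2) ∈ language F ↔ IsSubsetSumOn F (Set.univ : Set G2) m :=
  ⟨isSubsetSumOn_of_mk_one_mem_language, mk_one_mem_language_of_isSubsetSumOn⟩

end SubsetSumLanguage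

theorem stmt16_general (M : Type*) [AddCommGroup M]
    [DistribMulAction (Multiplicative (ℤ × ℤ)) M]
    (F : Finset M) (m : M) :
    let G' := Multiplicative (ℤ × ℤ)
    let x : Sd M G' := ((0 : M), Multiplicative.ofAdd ((1 : ℤ), (0 : ℤ)))
    let y : Sd M G' := ((0 : M), Multiplicative.ofAdd ((0 : ℤ), (1 : ℤ)))
    let Gen : Set (Sd M G') := {x, x⁻¹, y, y⁻¹}
    let Fx : Set (Sd M G') := (fun f => ((f, (1 : G')) : Sd M G') * x) '' (F : Set M)
    let L : Set (Sd M G') :=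
      (Submonoid.closure Gen : Set (Sd M G')) *
        (Submonoid.closure
          ((Submonoid.closure ({x} ∪ Fx) : Set (Sd M G')) * ({y} : Set (Sd M G')) *
            (Submonoid.closure ({x⁻¹} : Set (Sd M G')) : Set (Sd M G'))) :
          Set (Sd M G')) *
        (Submonoid.closure Gen : Set (Sd M G'))
    ((m, (1 : G')) ∈ L ↔
      ∃ (n : ℕ) (g : Fin n → G'), Function.Injective g ∧
        ∃ f : Fin n → M, (∀ i, f i ∈ F) ∧ m = ∑ i, g i • f i) :=
  SubsetSumLanguage.mk_one_mem_language_iff.trans isSubsetSumOn_univ_iff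

/-- Let `R` be a nonzero ring, `G = ℤ × ℤ`, and `M` a free `RG`-module.  In
`M ⋊ G`, with `x = (0,(1,0))` and `y = (0,(0,1))`, let `F ⊆ M` be a finite set
of nonzero elements and let `L` be the rational subset
`{x^{±1},y^{±1}}* [(x ∪ Fx)* y (x⁻¹)*]* {x^{±1},y^{±1}}*` (Kleene star = the
generated submonoid, concatenation = pointwise product of subsets).  Then
`(m,(0,0)) ∈ L` iff `m` is a subset sum of `F`, i.e. `m = Σᵢ gᵢ • fᵢ` with
pairwise distinct `gᵢ ∈ G` and `fᵢ ∈ F`. -/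
theorem stmt16 (R : Type*) [Ring R] [Nontrivial R] (M : Type*) [AddCommGroup M]
    [Module (MonoidAlgebra R (Multiplicative (ℤ × ℤ))) M]
    [DistribMulAction (Multiplicative (ℤ × ℤ)) M]
    (hcomp : ∀ (g : Multiplicative (ℤ × ℤ)) (v : M),
      g • v = (MonoidAlgebra.of R (Multiplicative (ℤ × ℤ)) g) • v)
    (ι : Type*) (b : Module.Basis ι (MonoidAlgebra R (Multiplicative (ℤ × ℤ))) M)
    (F : Finset M) (hF : ∀ f ∈ F, f ≠ (0 : M)) (m : M) :
    let G' := Multiplicative (ℤ × ℤ)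
    let x : Sd M G' := ((0 : M), Multiplicative.ofAdd ((1 : ℤ), (0 : ℤ)))
    let y : Sd M G' := ((0 : M), Multiplicative.ofAdd ((0 : ℤ), (1 : ℤ)))
    let Gen : Set (Sd M G') := {x, x⁻¹, y, y⁻¹}
    let Fx : Set (Sd M G') := (fun f => ((f, (1 : G')) : Sd M G') * x) '' (F : Set M)
    let L : Set (Sd M G') :=
      (Submonoid.closure Gen : Set (Sd M G')) *
        (Submonoid.closure
          ((Submonoid.closure ({x} ∪ Fx) : Set (Sd M G')) * ({y} : Set (Sd M G')) *
            (Submonoid.closure ({x⁻¹} : Set (Sd M G')) : Set (Sd M G'))) :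
          Set (Sd M G')) *
        (Submonoid.closure Gen : Set (Sd M G'))
    ((m, (1 : G')) ∈ L ↔
      ∃ (n : ℕ) (g : Fin n → G'), Function.Injective g ∧
        ∃ f : Fin n → M, (∀ i, f i ∈ F) ∧ m = ∑ i, g i • f i) :=
  stmt16_general M F m
end

section
/- Let M₂ be the free metabelian group on {x,y} with commutator subgroup C = [M₂,M₂], which is a free ℤ[ℤ×ℤ]-module of rank 1 on the commutator [x,y]. Fix m ≥ 1, let A = mℤ × ℤ, H = ⟨xᵐ, y⟩, and write C = F ⊕ [H,H] as ℤ[A]-modules where F is free of rank m−1 over ℤ[A]. Let N ⊆ F be a finitely generated A-subsemimodule and S the submonoid of M₂ generated by N ∪ H. Then S ∩ C = N ⊕ [H,H]; in particular for x ∈ F, x ∈ S if and only if x ∈ N. -/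
namespace Stmt18

/-- The free group of rank 2. -/
abbrev F2 := FreeGroup (Fin 2)

/-- The free metabelian group of rank 2: the quotient of the free group of
rank 2 by its second derived subgroup. -/
abbrev M2 := F2 ⧸ (⁅commutator F2, commutator F2⁆ : Subgroup F2)

/-- The first free generator of `M2`. -/
def x : M2 := QuotientGroup.mk (FreeGroup.of 0)

/-- The second free generator of `M2`. -/
def y : M2 := QuotientGroup.mk (FreeGroup.of 1)

/-- Let `M₂` be the free metabelian group on `{x,y}` with commutator subgroup
`C = [M₂,M₂]` (a free `ℤ[ℤ×ℤ]`-module of rank 1 on `[x,y]`, the module action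
being conjugation through the abelianization `φ`).  Fix `m ≥ 1`, let
`H = ⟨xᵐ,y⟩` and write `C = F ⊕ [H,H]` where `F` is free of rank `m-1` over
`ℤ[A]`, `A = mℤ × ℤ` (so `F` is `H`-conjugation invariant, `F ∩ [H,H] = 1` and
`F·[H,H] = C`).  Let `N ⊆ F` be a finitely generated `A`-subsemimodule
(a submonoid of `F` closed under conjugation by `H`) and `S` the submonoid of
`M₂` generated by `N ∪ H`.  Then `S ∩ C = N ⊕ [H,H]`; in particular, for
`f ∈ F`, `f ∈ S` iff `f ∈ N`. -/
theorem stmt18 (m : ℕ) (hm : 1 ≤ m)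
    (φ : M2 →* Multiplicative (ℤ × ℤ))
    (hx : φ x = Multiplicative.ofAdd ((1 : ℤ), (0 : ℤ)))
    (hy : φ y = Multiplicative.ofAdd ((0 : ℤ), (1 : ℤ)))
    (hker : φ.ker = commutator M2)
    (H : Subgroup M2) (hH : H = Subgroup.closure {x ^ m, y})
    (F : Subgroup M2) (hFC : F ≤ commutator M2)
    (hFinv : ∀ h ∈ H, ∀ f ∈ F, h * f * h⁻¹ ∈ F)
    (hFfree : Nonempty (F ≃* Multiplicative (((ℤ × ℤ) × Fin (m - 1)) →₀ ℤ)))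
    (hdisj : F ⊓ ⁅H, H⁆ = ⊥) (hsup : F ⊔ ⁅H, H⁆ = commutator M2)
    (N : Submonoid M2) (hNF : (N : Set M2) ⊆ (F : Set M2))
    (hNinv : ∀ h ∈ H, ∀ n ∈ N, h * n * h⁻¹ ∈ N)
    (hNfg : ∃ B : Finset M2,
      N = Submonoid.closure {z : M2 | ∃ h ∈ H, ∃ b ∈ B, z = h * b * h⁻¹})
    (S : Submonoid M2) (hS : S = Submonoid.closure ((N : Set M2) ∪ (H : Set M2))) :
    (S : Set M2) ∩ (commutator M2 : Set M2)
        = {z : M2 | ∃ n ∈ N, ∃ c ∈ (⁅H, H⁆ : Subgroup M2), z = n * c} ∧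
    ∀ f ∈ F, (f ∈ S ↔ f ∈ N) := by
  -- basic facts
  have hHHle : (⁅H, H⁆ : Subgroup M2) ≤ H := by
    rw [Subgroup.commutator_le]
    intro g₁ h₁ g₂ h₂
    rw [commutatorElement_def]
    exact mul_mem (mul_mem (mul_mem h₁ h₂) (inv_mem h₁)) (inv_mem h₂)
  have hHHC : (⁅H, H⁆ : Subgroup M2) ≤ commutator M2 :=
    Subgroup.commutator_mono le_top le_top
  have hu : x ^ m ∈ H := hH ▸ Subgroup.subset_closure (Set.mem_insert _ _)
  have hv : y ∈ H := hH ▸ Subgroup.subset_closure (Set.mem_insert_of_mem _ rfl)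
  have hNC : ∀ n ∈ N, n ∈ commutator M2 := fun n hn => hFC (hNF hn)
  -- key lemma: H ∩ ker φ ≤ [H,H]
  have key : ∀ h ∈ H, φ h = 1 → h ∈ (⁅H, H⁆ : Subgroup M2) := by
    intro h hh hφ
    set u' : ↥H := ⟨x ^ m, hu⟩
    set v' : ↥H := ⟨y, hv⟩
    have htop : Subgroup.closure ({u', v'} : Set ↥H) = ⊤ := by
      apply Subgroup.map_injective H.subtype_injective
      rw [MonoidHom.map_closure, ← MonoidHom.range_eq_map, Subgroup.range_subtype]
      rw [Set.image_insert_eq, Set.image_singleton]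
      simp only [Subgroup.coe_subtype]
      exact hH.symm
    have hmem : Abelianization.of (⟨h, hh⟩ : ↥H) ∈
        Subgroup.closure ({Abelianization.of u', Abelianization.of v'} :
          Set (Abelianization ↥H)) := by
      have h1 : (⟨h, hh⟩ : ↥H) ∈ Subgroup.closure ({u', v'} : Set ↥H) :=
        htop ▸ Subgroup.mem_top _
      have h2 := Subgroup.mem_map_of_mem (Abelianization.of (G := ↥H)) h1
      rwa [MonoidHom.map_closure, Set.image_insert_eq, Set.image_singleton] at h2
    rw [Subgroup.mem_closure_pair] at hmem
    obtain ⟨a, b, hab⟩ := hmem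
    have hab' : Abelianization.of (u' ^ a * v' ^ b) = Abelianization.of (⟨h, hh⟩ : ↥H) := by
      rw [map_mul, map_zpow, map_zpow]; exact hab
    have hcom : (u' ^ a * v' ^ b)⁻¹ * (⟨h, hh⟩ : ↥H) ∈ commutator ↥H := by
      rw [← QuotientGroup.eq]
      exact hab'
    -- push through φ
    have hφ1 : φ.comp H.subtype ((u' ^ a * v' ^ b)⁻¹ * ⟨h, hh⟩) = 1 :=
      Abelianization.commutator_subset_ker (φ.comp H.subtype) hcom
    have hφuv : φ.comp H.subtype (u' ^ a * v' ^ b) = φ h := by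
      rw [map_mul, map_inv] at hφ1
      have hφh : φ.comp H.subtype (⟨h, hh⟩ : ↥H) = φ h := rfl
      rw [hφh] at hφ1
      exact inv_mul_eq_one.mp hφ1
    rw [hφ] at hφuv
    have hval : φ.comp H.subtype (u' ^ a * v' ^ b)
        = Multiplicative.ofAdd (a * (m : ℤ), b) := by
      rw [map_mul, map_zpow, map_zpow]
      have h1 : φ.comp H.subtype u' = φ (x ^ m) := rfl
      have h2 : φ.comp H.subtype v' = φ y := rfl
      rw [h1, h2, map_pow, hx, hy]
      apply Multiplicative.toAdd.injective
      simp [← zpow_natCast, ← zpow_mul, mul_comm]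
    rw [hval] at hφuv
    have hab0 : a * (m : ℤ) = 0 ∧ b = 0 := by
      have := congrArg Multiplicative.toAdd hφuv
      simpa [Prod.ext_iff] using this
    have ha : a = 0 := by
      rcases mul_eq_zero.mp hab0.1 with h' | h'
      · exact h'
      · exfalso; omega
    rw [ha, hab0.2] at hcom
    simp only [zpow_zero, one_mul, inv_one] at hcom
    have hmap := Subgroup.mem_map_of_mem H.subtype hcom
    have heq : Subgroup.map H.subtype (commutator ↥H) = ⁅H, H⁆ := by
      have h3 := Subgroup.map_commutator (⊤ : Subgroup ↥H) ⊤ H.subtype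
      rw [← MonoidHom.range_eq_map, Subgroup.range_subtype] at h3
      exact h3
    rw [heq] at hmap
    exact hmap
  -- structure of S: every element of S is n * h with n ∈ N, h ∈ H
  have hSsub : ∀ s ∈ S, ∃ n ∈ N, ∃ h ∈ H, s = n * h := by
    intro s hs
    rw [hS] at hs
    induction hs using Submonoid.closure_induction with
    | mem z hz =>
      rcases hz with hz | hz
      · exact ⟨z, hz, 1, one_mem _, (mul_one z).symm⟩
      · exact ⟨1, one_mem _, z, hz, (one_mul z).symm⟩
    | one => exact ⟨1, one_mem _, 1, one_mem _, (one_mul 1).symm⟩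
    | mul a b _ _ iha ihb =>
      obtain ⟨n₁, hn₁, h₁, hh₁, rfl⟩ := iha
      obtain ⟨n₂, hn₂, h₂, hh₂, rfl⟩ := ihb
      exact ⟨n₁ * (h₁ * n₂ * h₁⁻¹), mul_mem hn₁ (hNinv h₁ hh₁ n₂ hn₂),
        h₁ * h₂, mul_mem hh₁ hh₂, by group⟩
  have hNS : ∀ n ∈ N, n ∈ S := fun n hn =>
    hS ▸ Submonoid.subset_closure (Or.inl hn)
  have hHS : ∀ h ∈ H, h ∈ S := fun h hh =>
    hS ▸ Submonoid.subset_closure (Or.inr hh)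
  have main : (S : Set M2) ∩ (commutator M2 : Set M2)
      = {z : M2 | ∃ n ∈ N, ∃ c ∈ (⁅H, H⁆ : Subgroup M2), z = n * c} := by
    ext z
    constructor
    · rintro ⟨hzS, hzC⟩
      obtain ⟨n, hn, h, hh, rfl⟩ := hSsub z hzS
      have hφnh : φ (n * h) = 1 := by
        have : n * h ∈ φ.ker := hker ▸ hzC
        exact this
      have hφn : φ n = 1 := by
        have : n ∈ φ.ker := by rw [hker]; exact hNC n hn
        exact this
      have hφh : φ h = 1 := by
        rw [map_mul, hφn, one_mul] at hφnh
        exact hφnh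
      exact ⟨n, hn, h, key h hh hφh, rfl⟩
    · rintro ⟨n, hn, c, hc, rfl⟩
      exact ⟨mul_mem (hNS n hn) (hHS c (hHHle hc)),
        mul_mem (hNC n hn) (hHHC hc)⟩
  refine ⟨main, fun f hf => ⟨fun hfS => ?_, fun hfN => hNS f hfN⟩⟩
  have : f ∈ (S : Set M2) ∩ (commutator M2 : Set M2) := ⟨hfS, hFC hf⟩
  rw [main] at this
  obtain ⟨n, hn, c, hc, hfe⟩ := this
  have hcF : c ∈ F := by
    have hnF : n ∈ F := hNF hn
    have : c = n⁻¹ * f := by rw [hfe]; group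
    rw [this]
    exact mul_mem (inv_mem hnF) hf
  have hc1 : c = 1 := by
    have : c ∈ F ⊓ ⁅H, H⁆ := ⟨hcF, hc⟩
    rw [hdisj] at this
    exact this
  rw [hfe, hc1, mul_one]
  exact hn

end Stmt18
end
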